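/- Suppose for a.e. x ∈ D̄, [P_t 1_{X₀}](x) → 0 as t → ∞, with the family uniformly dominated by an integrable function on each measurable A ⊆ D̄. Then for every measurable A ⊆ D̄, m({x ∈ X₀ : s_t(x) ∈ A}) → 0 as t → ∞; in particular, if A is a closed set not containing the target and trajectories are eventually monotone into the target neighborhood, the set of initial conditions in X₀ not converging to the target has Lebesgue measure zero. -/

import Mathlib

open MeasureTheory Set Filter
open scoped ENNReal

theorem tendsto_setLIntegral_zero_of_dominated {α ι : Type*} [MeasurableSpace α]
    {μ : Measure α} {l : Filter ι} [l.IsCountablyGenerated] {F : ι → α → ℝ≥0∞}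
    {g : α → ℝ≥0∞} {D A : Set α} (hF : ∀ i, Measurable (F i))
    (hg : ∫⁻ x in D, g x ∂μ ≠ ∞) (hdom : ∀ i, ∀ x ∈ D, F i x ≤ g x)
    (hlim : ∀ᵐ x ∂μ.restrict D, Tendsto (F · x) l (nhds 0))
    (hA : MeasurableSet A) (hAD : A ⊆ D) :
    Tendsto (fun i => ∫⁻ x in A, F i x ∂μ) l (nhds 0) := by
  have hdomA : ∀ i, ∀ᵐ x ∂μ.restrict A, F i x ≤ g x := fun i =>
    (ae_restrict_iff' hA).2 (Eventually.of_forall fun x hx => hdom i x (hAD hx))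
  have hgA : ∫⁻ x in A, g x ∂μ ≠ ∞ := ne_top_of_le_ne_top hg (lintegral_mono_set hAD)
  simpa using tendsto_lintegral_filter_of_dominated_convergence g
    (Eventually.of_forall hF) (Eventually.of_forall hdomA) hgA
    (ae_restrict_of_ae_restrict_of_subset hAD hlim)

theorem stmt19_general {n : ℕ} (D : Set (EuclideanSpace ℝ (Fin n)))
    (s : ℝ → EuclideanSpace ℝ (Fin n) → EuclideanSpace ℝ (Fin n))
    (X₀ : Set (EuclideanSpace ℝ (Fin n)))
    (Pind : ℝ → EuclideanSpace ℝ (Fin n) → ℝ≥0∞)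
    (hPmeas : ∀ t, Measurable (Pind t))
    (hPid : ∀ t : ℝ, ∀ A : Set (EuclideanSpace ℝ (Fin n)), MeasurableSet A → A ⊆ D →
      ∫⁻ x in A, Pind t x = volume {x ∈ X₀ | s t x ∈ A})
    (hdecay : ∀ᵐ x ∂(volume.restrict D),
      Tendsto (fun t => Pind t x) atTop (nhds 0))
    (g : EuclideanSpace ℝ (Fin n) → ℝ≥0∞)
    (hgint : ∫⁻ x in D, g x < ⊤)
    (hdom : ∀ t : ℝ, ∀ x ∈ D, Pind t x ≤ g x) :
    ∀ A : Set (EuclideanSpace ℝ (Fin n)), MeasurableSet A → A ⊆ D →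
      Tendsto (fun t => volume {x ∈ X₀ | s t x ∈ A}) atTop (nhds 0) := by
  intro A hA hAD
  simpa only [hPid _ A hA hAD] using
    tendsto_setLIntegral_zero_of_dominated hPmeas hgint.ne hdom hdecay hA hAD

/-- Final step of Theorem 1: if `[P_t 1_{X₀}] → 0` pointwise a.e. on `D̄` with a uniform
integrable dominating function, then for every measurable `A ⊆ D̄` the occupancy measure
`m({x ∈ X₀ : s_t(x) ∈ A})` tends to zero as `t → ∞` (via the identity
`∫_A [P_t 1_{X₀}] = m({x ∈ X₀ : s_t(x) ∈ A})` and dominated convergence). -/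
theorem stmt19 {n : ℕ} (D : Set (EuclideanSpace ℝ (Fin n))) (hD : MeasurableSet D)
    (s : ℝ → EuclideanSpace ℝ (Fin n) → EuclideanSpace ℝ (Fin n))
    (hsm : ∀ τ : ℝ, Measurable (s τ))
    (X₀ : Set (EuclideanSpace ℝ (Fin n))) (hX₀ : MeasurableSet X₀) (hX₀D : X₀ ⊆ D)
    (Pind : ℝ → EuclideanSpace ℝ (Fin n) → ℝ≥0∞)
    (hPmeas : ∀ t, Measurable (Pind t))
    (hPid : ∀ t : ℝ, ∀ A : Set (EuclideanSpace ℝ (Fin n)), MeasurableSet A → A ⊆ D →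
      ∫⁻ x in A, Pind t x = volume {x ∈ X₀ | s t x ∈ A})
    (hdecay : ∀ᵐ x ∂(volume.restrict D),
      Tendsto (fun t => Pind t x) atTop (nhds 0))
    (g : EuclideanSpace ℝ (Fin n) → ℝ≥0∞) (hg : Measurable g)
    (hgint : ∫⁻ x in D, g x < ⊤)
    (hdom : ∀ t : ℝ, ∀ x ∈ D, Pind t x ≤ g x) :
    ∀ A : Set (EuclideanSpace ℝ (Fin n)), MeasurableSet A → A ⊆ D →
      Tendsto (fun t => volume {x ∈ X₀ | s t x ∈ A}) atTop (nhds 0) :=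
  stmt19_general D s X₀ Pind hPmeas hPid hdecay g hgint hdom
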